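/- Let n, m ≥ 2 and let G = B_{n,m} be the dumbbell graph on V = A ∪ B, viewed as the simplicial complex Δ(G). Then δ_NF^(2)(Δ(G)) has exactly three facets: its facet family is { A, B, {x_1, y_1} }. -/

import Mathlib

/-- `C` is a vertex cover of the complex with facet family `F`:
it meets every facet. -/
def IsVC {V : Type*} (F : Set (Set V)) (C : Set V) : Prop :=
  ∀ f ∈ F, (C ∩ f).Nonempty

/-- `C` is a minimal vertex cover. -/
def IsMinVC {V : Type*} (F : Set (Set V)) (C : Set V) : Prop :=
  IsVC F C ∧ ∀ D : Set V, D ⊂ C → ¬ IsVC F D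

/-- The NF-operator on facet families: the facets of `nf F` are the
complements of the minimal vertex covers of `F`. -/
def nf {V : Type*} (F : Set (Set V)) : Set (Set V) :=
  {S | ∃ C : Set V, IsMinVC F C ∧ S = Cᶜ}

/-- The dumbbell graph `B_{n,m}` as a family of edges (facets) on the vertex
set `Fin n ⊕ Fin m`: all pairs inside `A = range Sum.inl`, all pairs inside
`B = range Sum.inr`, and the bridge edge `{x₁, y₁}` (indices `0`). -/
def dumbbell (n m : ℕ) : Set (Set (Fin n ⊕ Fin m)) :=
  {e | (∃ i j : Fin n, i ≠ j ∧ e = {Sum.inl i, Sum.inl j}) ∨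
       (∃ i j : Fin m, i ≠ j ∧ e = {Sum.inr i, Sum.inr j}) ∨
       (∃ (hn : 0 < n) (hm : 0 < m), e = {Sum.inl ⟨0, hn⟩, Sum.inr ⟨0, hm⟩})}

/-- The facet family obtained after one application of `nf` to the dumbbell:
all edges `{inl a, inr b}` except the pair `(0,0)`. -/
def F1 (n m : ℕ) : Set (Set (Fin n ⊕ Fin m)) :=
  {e | ∃ (a : Fin n) (b : Fin m), ¬(a.val = 0 ∧ b.val = 0) ∧
        e = {Sum.inl a, Sum.inr b}}

lemma minVC_dumbbell {n m : ℕ} (hn : 2 ≤ n) (hm : 2 ≤ m)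
    (C : Set (Fin n ⊕ Fin m)) :
    IsMinVC (dumbbell n m) C ↔
      ∃ (a : Fin n) (b : Fin m), ¬(a.val = 0 ∧ b.val = 0) ∧
        C = ({Sum.inl a, Sum.inr b} : Set (Fin n ⊕ Fin m))ᶜ := by
  constructor
  · rintro ⟨hcov, hmin⟩
    have hA : ∃ a : Fin n, Sum.inl a ∉ C := by
      by_contra h
      push_neg at h
      have h1 : Sum.inl (⟨1, by omega⟩ : Fin n) ∈ C := h _
      refine hmin (C \ {Sum.inl (⟨1, by omega⟩ : Fin n)})
        (Set.sdiff_singleton_ssubset.mpr h1) ?_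
      rintro f (⟨i, j, hij, rfl⟩ | ⟨i, j, hij, rfl⟩ | ⟨hn', hm', rfl⟩)
      · by_cases hi : i = (⟨1, by omega⟩ : Fin n)
        · refine ⟨Sum.inl j, ⟨h j, ?_⟩, by simp⟩
          simp only [Set.mem_singleton_iff, Sum.inl.injEq]
          exact fun hj => hij (hi.trans hj.symm)
        · refine ⟨Sum.inl i, ⟨h i, ?_⟩, by simp⟩
          simpa only [Set.mem_singleton_iff, Sum.inl.injEq] using hi
      · obtain ⟨v, hvC, hvf⟩ := hcov _ (Or.inr (Or.inl ⟨i, j, hij, rfl⟩))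
        refine ⟨v, ⟨hvC, ?_⟩, hvf⟩
        rcases hvf with rfl | rfl <;> simp
      · refine ⟨Sum.inl (⟨0, by omega⟩ : Fin n), ⟨h _, ?_⟩, by simp⟩
        simp only [Set.mem_singleton_iff, Sum.inl.injEq]
        intro hc
        have := congrArg Fin.val hc
        simp at this
    have hB : ∃ b : Fin m, Sum.inr b ∉ C := by
      by_contra h
      push_neg at h
      have h1 : Sum.inr (⟨1, by omega⟩ : Fin m) ∈ C := h _
      refine hmin (C \ {Sum.inr (⟨1, by omega⟩ : Fin m)})
        (Set.sdiff_singleton_ssubset.mpr h1) ?_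
      rintro f (⟨i, j, hij, rfl⟩ | ⟨i, j, hij, rfl⟩ | ⟨hn', hm', rfl⟩)
      · obtain ⟨v, hvC, hvf⟩ := hcov _ (Or.inl ⟨i, j, hij, rfl⟩)
        refine ⟨v, ⟨hvC, ?_⟩, hvf⟩
        rcases hvf with rfl | rfl <;> simp
      · by_cases hi : i = (⟨1, by omega⟩ : Fin m)
        · refine ⟨Sum.inr j, ⟨h j, ?_⟩, by simp⟩
          simp only [Set.mem_singleton_iff, Sum.inr.injEq]
          exact fun hj => hij (hi.trans hj.symm)
        · refine ⟨Sum.inr i, ⟨h i, ?_⟩, by simp⟩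
          simpa only [Set.mem_singleton_iff, Sum.inr.injEq] using hi
      · refine ⟨Sum.inr (⟨0, by omega⟩ : Fin m), ⟨h _, ?_⟩, by simp⟩
        simp only [Set.mem_singleton_iff, Sum.inr.injEq]
        intro hc
        have := congrArg Fin.val hc
        simp at this
    obtain ⟨a, ha⟩ := hA
    obtain ⟨b, hb⟩ := hB
    have haU : ∀ i : Fin n, Sum.inl i ∉ C → i = a := by
      intro i hi
      by_contra hne
      obtain ⟨v, hvC, hvf⟩ := hcov _ (Or.inl ⟨i, a, hne, rfl⟩)
      rcases hvf with rfl | rfl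
      · exact hi hvC
      · exact ha hvC
    have hbU : ∀ j : Fin m, Sum.inr j ∉ C → j = b := by
      intro j hj
      by_contra hne
      obtain ⟨v, hvC, hvf⟩ := hcov _ (Or.inr (Or.inl ⟨j, b, hne, rfl⟩))
      rcases hvf with rfl | rfl
      · exact hj hvC
      · exact hb hvC
    refine ⟨a, b, ?_, ?_⟩
    · rintro ⟨ha0, hb0⟩
      have haa : a = ⟨0, by omega⟩ := Fin.ext ha0
      have hbb : b = ⟨0, by omega⟩ := Fin.ext hb0
      obtain ⟨v, hvC, hvf⟩ := hcov _ (Or.inr (Or.inr ⟨by omega, by omega, rfl⟩))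
      rcases hvf with rfl | rfl
      · exact ha (by rwa [haa])
      · exact hb (by rwa [hbb])
    · ext v
      simp only [Set.mem_compl_iff, Set.mem_insert_iff, Set.mem_singleton_iff]
      constructor
      · intro hv h'
        rcases h' with rfl | rfl
        exacts [ha hv, hb hv]
      · intro hv
        by_contra hvC
        cases v with
        | inl i => exact hv (Or.inl (by rw [haU i hvC]))
        | inr j => exact hv (Or.inr (by rw [hbU j hvC]))
  · rintro ⟨a, b, hab, rfl⟩
    have hmemA : ∀ i : Fin n, i ≠ a →
        Sum.inl i ∈ ({Sum.inl a, Sum.inr b} : Set (Fin n ⊕ Fin m))ᶜ := by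
      intro i h
      simp [h]
    have hmemB : ∀ j : Fin m, j ≠ b →
        Sum.inr j ∈ ({Sum.inl a, Sum.inr b} : Set (Fin n ⊕ Fin m))ᶜ := by
      intro j h
      simp [h]
    constructor
    · rintro f (⟨i, j, hij, rfl⟩ | ⟨i, j, hij, rfl⟩ | ⟨hn', hm', rfl⟩)
      · by_cases hi : i = a
        · exact ⟨Sum.inl j, hmemA j (fun h => hij (hi.trans h.symm)), by simp⟩
        · exact ⟨Sum.inl i, hmemA i hi, by simp⟩
      · by_cases hi : i = b
        · exact ⟨Sum.inr j, hmemB j (fun h => hij (hi.trans h.symm)), by simp⟩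
        · exact ⟨Sum.inr i, hmemB i hi, by simp⟩
      · by_cases ha0 : a.val = 0
        · have hb0 : b.val ≠ 0 := fun h => hab ⟨ha0, h⟩
          refine ⟨Sum.inr ⟨0, by omega⟩, hmemB _ ?_, by simp⟩
          intro h
          exact hb0 (by rw [← h])
        · refine ⟨Sum.inl ⟨0, by omega⟩, hmemA _ ?_, by simp⟩
          intro h
          exact ha0 (by rw [← h])
    · intro D hD hDvc
      obtain ⟨v, hvC, hvD⟩ := Set.exists_of_ssubset hD
      cases v with
      | inl i =>
        have hia : i ≠ a := by
          intro h
          exact hvC (by simp [h])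
        obtain ⟨w, hwD, hwf⟩ := hDvc _ (Or.inl ⟨i, a, hia, rfl⟩)
        rcases hwf with rfl | rfl
        · exact hvD hwD
        · exact hD.subset hwD (Set.mem_insert _ _)
      | inr j =>
        have hjb : j ≠ b := by
          intro h
          exact hvC (by simp [h])
        obtain ⟨w, hwD, hwf⟩ := hDvc _ (Or.inr (Or.inl ⟨j, b, hjb, rfl⟩))
        rcases hwf with rfl | rfl
        · exact hvD hwD
        · exact hD.subset hwD (Set.mem_insert_of_mem _ rfl)

lemma nf_dumbbell {n m : ℕ} (hn : 2 ≤ n) (hm : 2 ≤ m) :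
    nf (dumbbell n m) = F1 n m := by
  ext S
  simp only [nf, Set.mem_setOf_eq, F1]
  constructor
  · rintro ⟨C, hC, rfl⟩
    obtain ⟨a, b, hab, rfl⟩ := (minVC_dumbbell hn hm C).mp hC
    exact ⟨a, b, hab, compl_compl _⟩
  · rintro ⟨a, b, hab, rfl⟩
    exact ⟨({Sum.inl a, Sum.inr b} : Set (Fin n ⊕ Fin m))ᶜ,
      (minVC_dumbbell hn hm _).mpr ⟨a, b, hab, rfl⟩, (compl_compl _).symm⟩

lemma minVC_F1 {n m : ℕ} (hn : 2 ≤ n) (hm : 2 ≤ m)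
    (C : Set (Fin n ⊕ Fin m)) :
    IsMinVC (F1 n m) C ↔
      C = Set.range Sum.inl ∨ C = Set.range Sum.inr ∨
        C = ({Sum.inl (⟨0, (by omega : 0 + 1 ≤ n)⟩ : Fin n),
              Sum.inr (⟨0, (by omega : 0 + 1 ≤ m)⟩ : Fin m)} : Set (Fin n ⊕ Fin m))ᶜ := by
  constructor
  · rintro ⟨hcov, hmin⟩
    by_cases hA : ∃ i : Fin n, Sum.inl i ∉ C
    · by_cases hB : ∃ j : Fin m, Sum.inr j ∉ C
      · obtain ⟨i, hi⟩ := hA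
        obtain ⟨j, hj⟩ := hB
        have hAU : ∀ i' : Fin n, Sum.inl i' ∉ C → i'.val = 0 := by
          intro i' h'
          by_contra h0
          obtain ⟨v, hvC, hvf⟩ := hcov _ ⟨i', j, fun hc => h0 hc.1, rfl⟩
          rcases hvf with rfl | rfl
          · exact h' hvC
          · exact hj hvC
        have hBU : ∀ j' : Fin m, Sum.inr j' ∉ C → j'.val = 0 := by
          intro j' h'
          by_contra h0
          obtain ⟨v, hvC, hvf⟩ := hcov _ ⟨i, j', fun hc => h0 hc.2, rfl⟩
          rcases hvf with rfl | rfl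
          · exact hi hvC
          · exact h' hvC
        right; right
        have hi0 : i = ⟨0, by omega⟩ := Fin.ext (hAU i hi)
        have hj0 : j = ⟨0, by omega⟩ := Fin.ext (hBU j hj)
        ext v
        simp only [Set.mem_compl_iff, Set.mem_insert_iff, Set.mem_singleton_iff]
        constructor
        · intro hv h'
          rcases h' with rfl | rfl
          · exact hi (hi0 ▸ hv)
          · exact hj (hj0 ▸ hv)
        · intro hv
          by_contra hvC
          cases v with
          | inl i' => exact hv (Or.inl (congrArg Sum.inl (Fin.ext (hAU i' hvC))))
          | inr j' => exact hv (Or.inr (congrArg Sum.inr (Fin.ext (hBU j' hvC))))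
      · push_neg at hB
        right; left
        have hsub : Set.range Sum.inr ⊆ C := by
          rintro v ⟨j, rfl⟩; exact hB j
        have hvc : IsVC (F1 n m) (Set.range Sum.inr) := by
          rintro f ⟨a, b, hab, rfl⟩
          exact ⟨Sum.inr b, ⟨b, rfl⟩, by simp⟩
        by_contra hne
        exact hmin _ (hsub.ssubset_of_ne (fun h => hne h.symm)) hvc
    · push_neg at hA
      left
      have hsub : Set.range Sum.inl ⊆ C := by
        rintro v ⟨i, rfl⟩; exact hA i
      have hvc : IsVC (F1 n m) (Set.range Sum.inl) := by
        rintro f ⟨a, b, hab, rfl⟩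
        exact ⟨Sum.inl a, ⟨a, rfl⟩, by simp⟩
      by_contra hne
      exact hmin _ (hsub.ssubset_of_ne (fun h => hne h.symm)) hvc
  · rintro (rfl | rfl | rfl)
    · constructor
      · rintro f ⟨a, b, hab, rfl⟩
        exact ⟨Sum.inl a, ⟨a, rfl⟩, by simp⟩
      · intro D hD hDvc
        obtain ⟨v, hvC, hvD⟩ := Set.exists_of_ssubset hD
        obtain ⟨a, rfl⟩ := hvC
        by_cases ha : a.val = 0
        · obtain ⟨w, hwD, hwf⟩ :=
            hDvc _ ⟨a, ⟨1, by omega⟩, fun hc => by simp at hc, rfl⟩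
          rcases hwf with rfl | rfl
          · exact hvD hwD
          · obtain ⟨a', ha'⟩ := hD.subset hwD
            exact (Sum.inl_ne_inr ha')
        · obtain ⟨w, hwD, hwf⟩ :=
            hDvc _ ⟨a, ⟨0, by omega⟩, fun hc => ha hc.1, rfl⟩
          rcases hwf with rfl | rfl
          · exact hvD hwD
          · obtain ⟨a', ha'⟩ := hD.subset hwD
            exact (Sum.inl_ne_inr ha')
    · constructor
      · rintro f ⟨a, b, hab, rfl⟩
        exact ⟨Sum.inr b, ⟨b, rfl⟩, by simp⟩
      · intro D hD hDvc
        obtain ⟨v, hvC, hvD⟩ := Set.exists_of_ssubset hD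
        obtain ⟨b, rfl⟩ := hvC
        by_cases hb : b.val = 0
        · obtain ⟨w, hwD, hwf⟩ :=
            hDvc _ ⟨⟨1, by omega⟩, b, fun hc => by simp at hc, rfl⟩
          rcases hwf with rfl | rfl
          · obtain ⟨b', hb'⟩ := hD.subset hwD
            exact (Sum.inr_ne_inl hb')
          · exact hvD hwD
        · obtain ⟨w, hwD, hwf⟩ :=
            hDvc _ ⟨⟨0, by omega⟩, b, fun hc => hb hc.2, rfl⟩
          rcases hwf with rfl | rfl
          · obtain ⟨b', hb'⟩ := hD.subset hwD
            exact (Sum.inr_ne_inl hb')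
          · exact hvD hwD
    · constructor
      · rintro f ⟨a, b, hab, rfl⟩
        by_cases ha : a.val = 0
        · have hb : b.val ≠ 0 := fun h => hab ⟨ha, h⟩
          refine ⟨Sum.inr b, ?_, by simp⟩
          simp only [Set.mem_compl_iff, Set.mem_insert_iff, Set.mem_singleton_iff]
          rintro (h | h)
          · exact Sum.inr_ne_inl h
          · exact hb (by rw [Sum.inr.injEq] at h; exact congrArg Fin.val h)
        · refine ⟨Sum.inl a, ?_, by simp⟩
          simp only [Set.mem_compl_iff, Set.mem_insert_iff, Set.mem_singleton_iff]
          rintro (h | h)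
          · exact ha (by rw [Sum.inl.injEq] at h; exact congrArg Fin.val h)
          · exact Sum.inl_ne_inr h
      · intro D hD hDvc
        obtain ⟨v, hvC, hvD⟩ := Set.exists_of_ssubset hD
        simp only [Set.mem_compl_iff, Set.mem_insert_iff, Set.mem_singleton_iff] at hvC
        push_neg at hvC
        cases v with
        | inl a =>
          have ha : a.val ≠ 0 := by
            intro h
            exact hvC.1 (congrArg Sum.inl (Fin.ext h))
          obtain ⟨w, hwD, hwf⟩ :=
            hDvc _ ⟨a, ⟨0, by omega⟩, fun hc => ha hc.1, rfl⟩
          rcases hwf with rfl | rfl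
          · exact hvD hwD
          · have := hD.subset hwD
            simp at this
        | inr b =>
          have hb : b.val ≠ 0 := by
            intro h
            exact hvC.2 (congrArg Sum.inr (Fin.ext h))
          obtain ⟨w, hwD, hwf⟩ :=
            hDvc _ ⟨⟨0, by omega⟩, b, fun hc => hb hc.2, rfl⟩
          rcases hwf with rfl | rfl
          · have := hD.subset hwD
            simp at this
          · exact hvD hwD

/-- For `n, m ≥ 2`, the second NF-iterate of the dumbbell graph `B_{n,m}` has
exactly the three facets `A`, `B`, and `{x₁, y₁}`. -/
theorem dumbbell_nf_two (n m : ℕ) (hn : 2 ≤ n) (hm : 2 ≤ m) :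
    nf^[2] (dumbbell n m) =
      {Set.range Sum.inl, Set.range Sum.inr,
       ({Sum.inl (⟨0, by omega⟩ : Fin n), Sum.inr (⟨0, by omega⟩ : Fin m)} :
         Set (Fin n ⊕ Fin m))} := by
  have h2 : nf^[2] (dumbbell n m) = nf (nf (dumbbell n m)) := rfl
  rw [h2, nf_dumbbell hn hm]
  ext S
  simp only [nf, Set.mem_setOf_eq, Set.mem_insert_iff, Set.mem_singleton_iff]
  constructor
  · rintro ⟨C, hC, rfl⟩
    rcases (minVC_F1 hn hm C).mp hC with rfl | rfl | rfl
    · exact Or.inr (Or.inl Set.compl_range_inl)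
    · exact Or.inl Set.compl_range_inr
    · exact Or.inr (Or.inr (compl_compl _))
  · rintro (rfl | rfl | rfl)
    · exact ⟨Set.range Sum.inr, (minVC_F1 hn hm _).mpr (Or.inr (Or.inl rfl)),
        Set.compl_range_inr.symm⟩
    · exact ⟨Set.range Sum.inl, (minVC_F1 hn hm _).mpr (Or.inl rfl),
        Set.compl_range_inl.symm⟩
    · exact ⟨_, (minVC_F1 hn hm _).mpr (Or.inr (Or.inr rfl)),
        (compl_compl _).symm⟩
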